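/- arXiv:2310.17520 — 3 statements merged into one kernel-verified Lean document; each statement's English description precedes it below -/
import Mathlib

section
/- Let G=(V,E) be a finite graph and let f, g : V → ℝ be eigenfunctions of the normalized adjacency matrix D^{-1}A with eigenvalues μ and ν respectively. Then Σ_{{u,v}∈E} |f(u)g(u) − f(v)g(v)| ≤ (√2/2) (√(1+μ) + √(1+ν)) ‖f‖₂ ‖g‖₂. -/
open Finset Polynomial

noncomputable section
open scoped Classical

/-- The normalized adjacency matrix `D⁻¹A` of a finite graph. -/
def normAdj {V : Type*} [Fintype V] (G : SimpleGraph V) : Matrix V V ℝ :=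
  Matrix.of fun u v => if G.Adj u v then ((G.degree u : ℝ))⁻¹ else 0

/-- The degree-weighted inner product `⟨f,g⟩ = ∑ u, f u * g u * d_u`. -/
def dInner {V : Type*} [Fintype V] (G : SimpleGraph V) (f g : V → ℝ) : ℝ :=
  ∑ u, f u * g u * (G.degree u : ℝ)

/-- The `ℓ²`-norm associated to the degree-weighted inner product. -/
def dNorm {V : Type*} [Fintype V] (G : SimpleGraph V) (f : V → ℝ) : ℝ :=
  Real.sqrt (dInner G f f)

/-- Sum of a symmetric function `F` over the edges of a graph. -/
def edgeSum {V : Type*} [Fintype V] (G : SimpleGraph V)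
    (F : V → V → ℝ) (hF : ∀ u v, F u v = F v u) : ℝ :=
  ∑ e ∈ G.edgeFinset, Sym2.lift ⟨F, hF⟩ e

namespace EdgeSumAux

open SimpleGraph

variable {V : Type*} [Fintype V] (G : SimpleGraph V)

/-- Darts are in bijection with pairs (vertex, neighbor). -/
def dartEquiv : (Σ u, G.neighborSet u) ≃ G.Dart where
  toFun s := ⟨(s.1, s.2), s.2.2⟩
  invFun d := ⟨d.fst, d.snd, d.adj⟩
  left_inv s := rfl
  right_inv d := rfl

lemma dart_sum (F : V → V → ℝ) :
    ∑ d : G.Dart, F d.fst d.snd = ∑ u, ∑ v, if G.Adj u v then F u v else 0 := by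
  rw [← Equiv.sum_comp (dartEquiv G) (fun d : G.Dart => F d.fst d.snd),
    ← Finset.univ_sigma_univ, Finset.sum_sigma]
  refine Finset.sum_congr rfl fun u _ => ?_
  have h1 : ∑ v ∈ G.neighborFinset u, F u v = ∑ w : G.neighborSet u, F u w :=
    Finset.sum_subtype (G.neighborFinset u) (fun v => by simp) (F u)
  rw [← Finset.sum_filter, ← neighborFinset_eq_filter, h1]
  rfl

lemma dart_sum_fst (φ : V → ℝ) :
    ∑ d : G.Dart, φ d.fst = ∑ u, φ u * (G.degree u : ℝ) := by
  rw [dart_sum G (fun u _ => φ u)]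
  refine Finset.sum_congr rfl fun u _ => ?_
  rw [← sum_filter, sum_const, ← neighborFinset_eq_filter, nsmul_eq_mul]
  rw [SimpleGraph.degree, mul_comm]

lemma dart_sum_snd (φ : V → ℝ) :
    ∑ d : G.Dart, φ d.snd = ∑ u, φ u * (G.degree u : ℝ) := by
  rw [← dart_sum_fst G φ]
  rw [← Equiv.sum_comp (Function.Involutive.toPerm _
    (SimpleGraph.Dart.symm_involutive (G := G))) (fun d : G.Dart => φ d.snd)]
  rfl

lemma dart_sum_eigen (μ : ℝ) (f : V → ℝ) (hfe : (normAdj G).mulVec f = μ • f) :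
    ∑ d : G.Dart, f d.fst * f d.snd = μ * dInner G f f := by
  rw [dart_sum G (fun u v => f u * f v), dInner, Finset.mul_sum]
  refine Finset.sum_congr rfl fun u _ => ?_
  by_cases hd : G.degree u = 0
  · have hnadj : ∀ v, ¬ G.Adj u v := by
      intro v hv
      have hpos : 0 < G.degree u := (G.degree_pos_iff_exists_adj u).mpr ⟨v, hv⟩
      omega
    rw [Finset.sum_eq_zero (fun v _ => by simp [hnadj v]), hd]
    simp
  · have h := congrFun hfe u
    have hmv : ∑ v, (if G.Adj u v then ((G.degree u : ℝ))⁻¹ * f v else 0) = μ * f u := by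
      simpa [Matrix.mulVec, dotProduct, normAdj, ite_mul] using h
    have hdne : ((G.degree u : ℝ)) ≠ 0 := Nat.cast_ne_zero.mpr hd
    have : ∑ v, (if G.Adj u v then f u * f v else 0)
        = (f u * (G.degree u : ℝ)) * ∑ v, (if G.Adj u v then ((G.degree u : ℝ))⁻¹ * f v else 0) := by
      rw [Finset.mul_sum]
      refine Finset.sum_congr rfl fun v _ => ?_
      by_cases hadj : G.Adj u v
      · simp only [hadj, if_true]
        field_simp
      · simp [hadj]
    rw [this, hmv]
    ring

lemma dart_sum_eq_two_mul_edgeSum (F : V → V → ℝ) (hF : ∀ u v, F u v = F v u) :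
    ∑ d : G.Dart, F d.fst d.snd = 2 * edgeSum G F hF := by
  rw [edgeSum, Finset.mul_sum]
  rw [← Finset.sum_fiberwise_of_maps_to (s := (univ : Finset G.Dart)) (t := G.edgeFinset)
    (g := SimpleGraph.Dart.edge)
    (fun d _ => by rw [mem_edgeFinset]; exact d.edge_mem) (fun d : G.Dart => F d.fst d.snd)]
  refine Finset.sum_congr rfl fun e he => ?_
  have he' : e ∈ G.edgeSet := by rwa [← mem_edgeFinset]
  have hcard : #{d : G.Dart | d.edge = e} = 2 := G.dart_edge_fiber_card e he'
  have hval : ∀ d ∈ ({d : G.Dart | d.edge = e} : Finset _),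
      F d.fst d.snd = Sym2.lift ⟨F, hF⟩ e := by
    intro d hd
    simp only [mem_filter] at hd
    rw [← hd.2]
    rfl
  rw [Finset.sum_congr rfl hval, sum_const, hcard]
  simp [mul_comm]

lemma cs_abs {ι : Type*} [Fintype ι] (a b : ι → ℝ) :
    ∑ i, |a i| * |b i| ≤ Real.sqrt (∑ i, a i ^ 2) * Real.sqrt (∑ i, b i ^ 2) := by
  have h := Finset.sum_mul_sq_le_sq_mul_sq univ (fun i => |a i|) (fun i => |b i|)
  simp only [sq_abs] at h
  have h0 : (0:ℝ) ≤ ∑ i, |a i| * |b i| :=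
    Finset.sum_nonneg fun i _ => mul_nonneg (abs_nonneg _) (abs_nonneg _)
  calc ∑ i, |a i| * |b i| = Real.sqrt ((∑ i, |a i| * |b i|) ^ 2) := (Real.sqrt_sq h0).symm
    _ ≤ Real.sqrt ((∑ i, a i ^ 2) * ∑ i, b i ^ 2) := Real.sqrt_le_sqrt h
    _ = _ := Real.sqrt_mul (Finset.sum_nonneg fun i _ => sq_nonneg _) _

lemma sqrt_two_mul_split (b c : ℝ) (hc : 0 ≤ c) (h : 0 ≤ 2 * b * c) :
    Real.sqrt (2 * b * c) = Real.sqrt 2 * Real.sqrt b * Real.sqrt c := by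
  rcases eq_or_lt_of_le hc with hc0 | hcpos
  · simp [← hc0]
  · have hb : 0 ≤ b := by nlinarith
    rw [Real.sqrt_mul (by positivity), Real.sqrt_mul (by norm_num)]

lemma sqrt_one_sub_mul_le (ν c : ℝ) (hc : 0 ≤ c) (h : 0 ≤ (1 + ν) * c) :
    Real.sqrt (1 - ν) * Real.sqrt c ≤ Real.sqrt 2 * Real.sqrt c := by
  rcases eq_or_lt_of_le hc with hc0 | hcpos
  · simp [← hc0]
  · have hν : -1 ≤ ν := by nlinarith
    have : (1 : ℝ) - ν ≤ 2 := by linarith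
    exact mul_le_mul_of_nonneg_right (Real.sqrt_le_sqrt this) (Real.sqrt_nonneg _)

end EdgeSumAux

/-- **Lemma 2**: if `f, g` are eigenfunctions of `D⁻¹A` with eigenvalues `μ, ν`, then
`∑_{{u,v}∈E} |f(u)g(u) - f(v)g(v)| ≤ (√2/2)(√(1+μ) + √(1+ν)) ‖f‖₂ ‖g‖₂`. -/
theorem edgeSum_abs_prod_le {V : Type*} [Fintype V] (G : SimpleGraph V)
    (μ ν : ℝ) (f g : V → ℝ)
    (hf : f ≠ 0) (hfe : (normAdj G).mulVec f = μ • f)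
    (hg : g ≠ 0) (hge : (normAdj G).mulVec g = ν • g) :
    edgeSum G (fun u v => |f u * g u - f v * g v|) (fun u v => by (try simp only []); rw [abs_sub_comm]) ≤
      Real.sqrt 2 / 2 * (Real.sqrt (1 + μ) + Real.sqrt (1 + ν)) * dNorm G f * dNorm G g := by
  classical
  open EdgeSumAux in
  set F2 := dInner G f f with hF2def
  set G2 := dInner G g g with hG2def
  have hF2 : 0 ≤ F2 := Finset.sum_nonneg fun u _ => by
    have : 0 ≤ f u * f u := mul_self_nonneg _
    positivity
  have hG2 : 0 ≤ G2 := Finset.sum_nonneg fun u _ => by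
    have : 0 ≤ g u * g u := mul_self_nonneg _
    positivity
  -- dart sum expansions
  have hsq : ∀ (φ : V → ℝ), ∑ d : G.Dart, φ d.fst * φ d.fst = dInner G φ φ := fun φ =>
    dart_sum_fst G (fun u => φ u * φ u)
  have hsq' : ∀ (φ : V → ℝ), ∑ d : G.Dart, φ d.snd * φ d.snd = dInner G φ φ := fun φ =>
    dart_sum_snd G (fun u => φ u * φ u)
  have splus : ∀ (φ : V → ℝ) (lam : ℝ), (normAdj G).mulVec φ = lam • φ →
      ∑ d : G.Dart, (φ d.fst + φ d.snd) ^ 2 = 2 * (1 + lam) * dInner G φ φ := by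
    intro φ lam hφ
    have hexp : ∀ d : G.Dart, (φ d.fst + φ d.snd) ^ 2
        = φ d.fst * φ d.fst + φ d.snd * φ d.snd + 2 * (φ d.fst * φ d.snd) := fun d => by ring
    rw [Finset.sum_congr rfl (fun d _ => hexp d), Finset.sum_add_distrib,
      Finset.sum_add_distrib, ← Finset.mul_sum, hsq φ, hsq' φ, dart_sum_eigen G lam φ hφ]
    ring
  have sminus : ∀ (φ : V → ℝ) (lam : ℝ), (normAdj G).mulVec φ = lam • φ →
      ∑ d : G.Dart, (φ d.fst - φ d.snd) ^ 2 = 2 * (1 - lam) * dInner G φ φ := by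
    intro φ lam hφ
    have hexp : ∀ d : G.Dart, (φ d.fst - φ d.snd) ^ 2
        = φ d.fst * φ d.fst + φ d.snd * φ d.snd - 2 * (φ d.fst * φ d.snd) := fun d => by ring
    rw [Finset.sum_congr rfl (fun d _ => hexp d), Finset.sum_sub_distrib,
      Finset.sum_add_distrib, ← Finset.mul_sum, hsq φ, hsq' φ, dart_sum_eigen G lam φ hφ]
    ring
  -- nonnegativity consequences
  have hpf : 0 ≤ 2 * (1 + μ) * F2 := by
    rw [← splus f μ hfe]; exact Finset.sum_nonneg fun d _ => sq_nonneg _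
  have hpg : 0 ≤ 2 * (1 + ν) * G2 := by
    rw [← splus g ν hge]; exact Finset.sum_nonneg fun d _ => sq_nonneg _
  have hmf : 0 ≤ 2 * (1 - μ) * F2 := by
    rw [← sminus f μ hfe]; exact Finset.sum_nonneg fun d _ => sq_nonneg _
  have hmg : 0 ≤ 2 * (1 - ν) * G2 := by
    rw [← sminus g ν hge]; exact Finset.sum_nonneg fun d _ => sq_nonneg _
  -- the dart sum T
  set T := ∑ d : G.Dart, |f d.fst * g d.fst - f d.snd * g d.snd| with hTdef
  have hT : T = 2 * edgeSum G (fun u v => |f u * g u - f v * g v|)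
      (fun u v => by (try simp only []); rw [abs_sub_comm]) :=
    dart_sum_eq_two_mul_edgeSum G (fun u v => |f u * g u - f v * g v|)
      (fun u v => by (try simp only []); rw [abs_sub_comm])
  -- pointwise bound
  have hpt : ∀ d : G.Dart, |f d.fst * g d.fst - f d.snd * g d.snd|
      ≤ (|f d.fst + f d.snd| * |g d.fst - g d.snd|
        + |g d.fst + g d.snd| * |f d.fst - f d.snd|) / 2 := by
    intro d
    rw [le_div_iff₀ (by norm_num : (0:ℝ) < 2)]
    calc |f d.fst * g d.fst - f d.snd * g d.snd| * 2
        = |(f d.fst * g d.fst - f d.snd * g d.snd) * 2| := by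
          rw [abs_mul, abs_two]
      _ = |(f d.fst + f d.snd) * (g d.fst - g d.snd)
            + (g d.fst + g d.snd) * (f d.fst - f d.snd)| := by
          rw [show (f d.fst * g d.fst - f d.snd * g d.snd) * 2
            = (f d.fst + f d.snd) * (g d.fst - g d.snd)
              + (g d.fst + g d.snd) * (f d.fst - f d.snd) from by ring]
      _ ≤ |(f d.fst + f d.snd) * (g d.fst - g d.snd)|
            + |(g d.fst + g d.snd) * (f d.fst - f d.snd)| := abs_add_le _ _
      _ = _ := by rw [abs_mul, abs_mul]
  set A := ∑ d : G.Dart, |f d.fst + f d.snd| * |g d.fst - g d.snd| with hAdef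
  set B := ∑ d : G.Dart, |g d.fst + g d.snd| * |f d.fst - f d.snd| with hBdef
  have hTAB : T ≤ (A + B) / 2 := by
    calc T ≤ ∑ d : G.Dart, (|f d.fst + f d.snd| * |g d.fst - g d.snd|
          + |g d.fst + g d.snd| * |f d.fst - f d.snd|) / 2 :=
        Finset.sum_le_sum fun d _ => hpt d
      _ = (A + B) / 2 := by rw [hAdef, hBdef, ← Finset.sum_add_distrib, ← Finset.sum_div]
  -- Cauchy-Schwarz bounds
  have hA : A ≤ Real.sqrt 2 * Real.sqrt (1 + μ) * Real.sqrt F2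
      * (Real.sqrt 2 * Real.sqrt (1 - ν) * Real.sqrt G2) := by
    calc A ≤ Real.sqrt (∑ d : G.Dart, (f d.fst + f d.snd) ^ 2)
        * Real.sqrt (∑ d : G.Dart, (g d.fst - g d.snd) ^ 2) :=
        cs_abs (fun d : G.Dart => f d.fst + f d.snd) (fun d : G.Dart => g d.fst - g d.snd)
      _ = _ := by
        rw [splus f μ hfe, sminus g ν hge, sqrt_two_mul_split _ _ hF2 hpf,
          sqrt_two_mul_split _ _ hG2 hmg]
  have hB : B ≤ Real.sqrt 2 * Real.sqrt (1 + ν) * Real.sqrt G2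
      * (Real.sqrt 2 * Real.sqrt (1 - μ) * Real.sqrt F2) := by
    calc B ≤ Real.sqrt (∑ d : G.Dart, (g d.fst + g d.snd) ^ 2)
        * Real.sqrt (∑ d : G.Dart, (f d.fst - f d.snd) ^ 2) :=
        cs_abs (fun d : G.Dart => g d.fst + g d.snd) (fun d : G.Dart => f d.fst - f d.snd)
      _ = _ := by
        rw [splus g ν hge, sminus f μ hfe, sqrt_two_mul_split _ _ hG2 hpg,
          sqrt_two_mul_split _ _ hF2 hmf]
  -- replace √(1-ν), √(1-μ) by √2
  have hA' : A ≤ 2 * Real.sqrt 2 * Real.sqrt (1 + μ) * Real.sqrt F2 * Real.sqrt G2 := by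
    refine hA.trans ?_
    have key : Real.sqrt (1 - ν) * Real.sqrt G2 ≤ Real.sqrt 2 * Real.sqrt G2 :=
      sqrt_one_sub_mul_le ν G2 hG2 (by nlinarith)
    have h2 : 0 ≤ Real.sqrt 2 * Real.sqrt (1 + μ) * Real.sqrt F2 * Real.sqrt 2 := by positivity
    calc Real.sqrt 2 * Real.sqrt (1 + μ) * Real.sqrt F2
          * (Real.sqrt 2 * Real.sqrt (1 - ν) * Real.sqrt G2)
        = (Real.sqrt 2 * Real.sqrt (1 + μ) * Real.sqrt F2 * Real.sqrt 2)
          * (Real.sqrt (1 - ν) * Real.sqrt G2) := by ring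
      _ ≤ (Real.sqrt 2 * Real.sqrt (1 + μ) * Real.sqrt F2 * Real.sqrt 2)
          * (Real.sqrt 2 * Real.sqrt G2) := mul_le_mul_of_nonneg_left key h2
      _ = (Real.sqrt 2 * Real.sqrt 2 * Real.sqrt 2)
          * Real.sqrt (1 + μ) * Real.sqrt F2 * Real.sqrt G2 := by ring
      _ = 2 * Real.sqrt 2 * Real.sqrt (1 + μ) * Real.sqrt F2 * Real.sqrt G2 := by
          rw [Real.mul_self_sqrt (by norm_num : (0:ℝ) ≤ 2)]
  have hB' : B ≤ 2 * Real.sqrt 2 * Real.sqrt (1 + ν) * Real.sqrt F2 * Real.sqrt G2 := by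
    refine hB.trans ?_
    have key : Real.sqrt (1 - μ) * Real.sqrt F2 ≤ Real.sqrt 2 * Real.sqrt F2 :=
      sqrt_one_sub_mul_le μ F2 hF2 (by nlinarith)
    have h2 : 0 ≤ Real.sqrt 2 * Real.sqrt (1 + ν) * Real.sqrt G2 * Real.sqrt 2 := by positivity
    calc Real.sqrt 2 * Real.sqrt (1 + ν) * Real.sqrt G2
          * (Real.sqrt 2 * Real.sqrt (1 - μ) * Real.sqrt F2)
        = (Real.sqrt 2 * Real.sqrt (1 + ν) * Real.sqrt G2 * Real.sqrt 2)
          * (Real.sqrt (1 - μ) * Real.sqrt F2) := by ring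
      _ ≤ (Real.sqrt 2 * Real.sqrt (1 + ν) * Real.sqrt G2 * Real.sqrt 2)
          * (Real.sqrt 2 * Real.sqrt F2) := mul_le_mul_of_nonneg_left key h2
      _ = (Real.sqrt 2 * Real.sqrt 2 * Real.sqrt 2)
          * Real.sqrt (1 + ν) * Real.sqrt F2 * Real.sqrt G2 := by ring
      _ = 2 * Real.sqrt 2 * Real.sqrt (1 + ν) * Real.sqrt F2 * Real.sqrt G2 := by
          rw [Real.mul_self_sqrt (by norm_num : (0:ℝ) ≤ 2)]
  -- conclude
  have hfinal : T ≤ Real.sqrt 2 * (Real.sqrt (1 + μ) + Real.sqrt (1 + ν))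
      * Real.sqrt F2 * Real.sqrt G2 := by
    refine hTAB.trans ?_
    have := add_le_add hA' hB'
    linarith
  rw [dNorm, dNorm, ← hF2def, ← hG2def]
  have hT2 : edgeSum G (fun u v => |f u * g u - f v * g v|)
      (fun u v => by (try simp only []); rw [abs_sub_comm]) = T / 2 := by
    rw [hT]; ring
  rw [hT2]
  rw [div_le_iff₀ (by norm_num : (0:ℝ) < 2)] at *
  linarith [hfinal]

end
end

section
/- Let G=(V,E) be a finite connected graph with second-largest normalized adjacency eigenvalue μ_2, and let f be an eigenfunction of D^{-1}A with eigenvalue μ and ‖f‖₂ = 1. Let c be the constant function on V with ‖c‖₂ = 1 and set f₁ := |f| − ⟨|f|, c⟩ c. Then ‖f₁‖₂² ≤ (1+μ)/(1−μ_2). -/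
open Finset Polynomial

noncomputable section
open scoped Classical

lemma charpoly_conj' {n R : Type*} [Fintype n] [DecidableEq n] [CommRing R] (P A Q : Matrix n n R)
    (h1 : P * Q = 1) (h2 : Q * P = 1) : (P * A * Q).charpoly = A.charpoly := by
  have hcomm : ∀ M : Matrix n n R[X],
      (Matrix.scalar n) (X : R[X]) * M = M * (Matrix.scalar n) (X : R[X]) :=
    fun M => Commute.eq (Matrix.scalar_commute (X : R[X]) (fun r' => mul_comm X r') M)
  have key : Matrix.charmatrix (P * A * Q) =
      (C : R →+* R[X]).mapMatrix P * Matrix.charmatrix A * (C : R →+* R[X]).mapMatrix Q := by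
    unfold Matrix.charmatrix
    rw [mul_sub, sub_mul]
    congr 1
    · rw [← hcomm, mul_assoc, ← _root_.map_mul ((C : R →+* R[X]).mapMatrix), h1,
        _root_.map_one, mul_one]
    · simp only [← _root_.map_mul ((C : R →+* R[X]).mapMatrix), mul_assoc]
  have hdet : ((C : R →+* R[X]).mapMatrix P).det * ((C : R →+* R[X]).mapMatrix Q).det = 1 := by
    rw [← Matrix.det_mul, ← _root_.map_mul, h1, _root_.map_one, Matrix.det_one]
  unfold Matrix.charpoly
  rw [key, Matrix.det_mul, Matrix.det_mul]
  calc ((C : R →+* R[X]).mapMatrix P).det * (Matrix.charmatrix A).det *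
        ((C : R →+* R[X]).mapMatrix Q).det
      = ((C : R →+* R[X]).mapMatrix P).det * ((C : R →+* R[X]).mapMatrix Q).det *
        (Matrix.charmatrix A).det := by ring
    _ = (Matrix.charmatrix A).det := by rw [hdet, one_mul]

lemma charpoly_diag' {n R : Type*} [Fintype n] [DecidableEq n] [CommRing R] (d : n → R) :
    (Matrix.diagonal d).charpoly = ∏ i, (X - C (d i)) := by
  have : Matrix.charmatrix (Matrix.diagonal d) = Matrix.diagonal (fun i => X - C (d i)) := by
    ext i j
    by_cases h : i = j <;> simp [Matrix.charmatrix_apply, Matrix.diagonal_apply, h]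
  rw [Matrix.charpoly, this, Matrix.det_diagonal]

/-- charpoly of a real symmetric matrix is the product over its eigenvalues. -/
lemma charpoly_eq_prod_eigs {n : Type*} [Fintype n] [DecidableEq n] {S : Matrix n n ℝ}
    (hS : S.IsHermitian) : S.charpoly = ∏ i, (X - C (hS.eigenvalues i)) := by
  have hU := (hS.eigenvectorUnitary).2
  have h1 : (hS.eigenvectorUnitary : Matrix n n ℝ) * star (hS.eigenvectorUnitary : Matrix n n ℝ) = 1 :=
    Matrix.mem_unitaryGroup_iff.mp hU
  have h2 : star (hS.eigenvectorUnitary : Matrix n n ℝ) * (hS.eigenvectorUnitary : Matrix n n ℝ) = 1 :=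
    Matrix.mem_unitaryGroup_iff'.mp hU
  conv_lhs => rw [hS.spectral_theorem, Unitary.conjStarAlgAut_apply]
  rw [charpoly_conj' _ _ _ h1 h2]
  have : (RCLike.ofReal ∘ hS.eigenvalues : n → ℝ) = hS.eigenvalues := by
    funext i; simp [RCLike.ofReal]
  rw [this, charpoly_diag']

set_option maxHeartbeats 2000000 in
/-- **Lemma 3, first inequality**: for a finite connected graph with eigenvalues
`μs (n-1) ≤ ⋯ ≤ μs 1 = μ₂ ≤ μs 0` (listed with multiplicity, in decreasing order, as the
roots of the characteristic polynomial of `D⁻¹A`), if `f` is an eigenfunction of `D⁻¹A`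
with eigenvalue `μ` and `‖f‖₂ = 1`, `c` is the constant function with `‖c‖₂ = 1`, and
`f₁ := |f| - ⟨|f|, c⟩ c`, then `‖f₁‖₂² ≤ (1+μ)/(1-μ₂)`. -/
theorem norm_sq_f₁_le {V : Type*} [Fintype V] (G : SimpleGraph V)
    (hconn : G.Connected) (hn : 2 ≤ Fintype.card V)
    (μs : Fin (Fintype.card V) → ℝ) (hanti : Antitone μs)
    (hchar : (normAdj G).charpoly = ∏ i, (X - C (μs i)))
    (μ : ℝ) (f : V → ℝ) (hf : f ≠ 0) (hfe : (normAdj G).mulVec f = μ • f)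
    (hfnorm : dNorm G f = 1)
    (c : V → ℝ) (hc : ∃ k : ℝ, ∀ u, c u = k) (hcnorm : dNorm G c = 1) :
    dNorm G (fun u => |f u| - dInner G (fun w => |f w|) c * c u) ^ 2 ≤
      (1 + μ) / (1 - μs ⟨1, by omega⟩) := by
  -- basic setup
  have hVne : Nonempty V := Fintype.card_pos_iff.mp (by omega)
  obtain ⟨u₁⟩ := hVne
  set d : V → ℝ := fun u => (G.degree u : ℝ) with hd_def
  have hd : ∀ u, 0 < d u := by
    intro u
    have : ∃ w, G.Adj u w := by
      obtain ⟨v, hv⟩ := Fintype.exists_ne_of_one_lt_card (by omega) u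
      obtain ⟨p⟩ := hconn.preconnected u v
      cases p with
      | nil => exact absurd rfl hv.symm
      | cons h _ => exact ⟨_, h⟩
    have h2 := (G.degree_pos_iff_exists_adj u).mpr this
    show (0:ℝ) < (G.degree u : ℝ)
    exact_mod_cast h2
  set s : V → ℝ := fun u => Real.sqrt (d u) with hs_def
  have hs : ∀ u, 0 < s u := fun u => Real.sqrt_pos.mpr (hd u)
  have hs2 : ∀ u, s u * s u = d u := fun u => Real.mul_self_sqrt (hd u).le
  have hsne : ∀ u, s u ≠ 0 := fun u => (hs u).ne'
  set S : Matrix V V ℝ := Matrix.of (fun u v => if G.Adj u v then (s u * s v)⁻¹ else 0) with hS_def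
  have hM_eq : normAdj G = Matrix.diagonal (fun u => (s u)⁻¹) * S * Matrix.diagonal s := by
    ext u v
    rw [Matrix.mul_diagonal, Matrix.diagonal_mul]
    simp only [normAdj, Matrix.of_apply, hS_def]
    by_cases h : G.Adj u v
    · simp only [h, if_true]
      have e : (G.degree u : ℝ) = s u * s u := (hs2 u).symm
      rw [e]
      have h1 := hsne u
      have h2 := hsne v
      field_simp
    · simp [h]
  have hSchar : S.charpoly = ∏ i, (X - C (μs i)) := by
    rw [← hchar, hM_eq]
    refine Eq.symm ?_
    refine charpoly_conj' _ _ _ ?_ ?_ <;>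
      · rw [Matrix.diagonal_mul_diagonal]
        convert Matrix.diagonal_one using 2
        funext u
        first
          | exact inv_mul_cancel₀ (hsne u)
          | exact mul_inv_cancel₀ (hsne u)
  have hSsymm : ∀ u v, S u v = S v u := by
    intro u v
    simp only [hS_def, Matrix.of_apply]
    rw [G.adj_comm]
    by_cases h : G.Adj v u <;> simp [h, mul_comm]
  have hherm : S.IsHermitian := by
    ext u v
    simp only [Matrix.conjTranspose_apply, star_trivial]
    exact hSsymm v u
  -- eigen data
  have heigs : S.charpoly = ∏ i : V, (X - C (hherm.eigenvalues i)) := charpoly_eq_prod_eigs hherm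
  set lam : V → ℝ := hherm.eigenvalues with hlam_def
  set b : V → V → ℝ := fun i => (WithLp.equiv 2 (V → ℝ)) (hherm.eigenvectorBasis i) with hb_def
  have hb_eig : ∀ i, S.mulVec (b i) = lam i • b i := fun i => hherm.mulVec_eigenvectorBasis i
  have hb_ortho : ∀ i j, (∑ u, b i u * b j u) = if i = j then 1 else 0 := by
    intro i j
    have h := (orthonormal_iff_ite.mp hherm.eigenvectorBasis.orthonormal) i j
    rw [PiLp.inner_apply] at h
    simpa [RCLike.inner_apply, hb_def, mul_comm] using h
  have hb_expand : ∀ x : V → ℝ, x = ∑ i, (∑ u, b i u * x u) • b i := by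
    intro x
    have h := hherm.eigenvectorBasis.sum_repr ((WithLp.equiv 2 (V → ℝ)).symm x)
    have h2 : ∀ i, hherm.eigenvectorBasis.repr ((WithLp.equiv 2 (V → ℝ)).symm x) i
        = ∑ u, b i u * x u := by
      intro i
      rw [OrthonormalBasis.repr_apply_apply, PiLp.inner_apply]
      simp [RCLike.inner_apply, hb_def, mul_comm]
    have h3 : (∑ i, (∑ u, b i u * x u) • hherm.eigenvectorBasis i)
        = (WithLp.equiv 2 (V → ℝ)).symm x := by
      rw [← h]
      exact Finset.sum_congr rfl fun i _ => by rw [h2]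
    have h4 := congrArg (WithLp.equiv 2 (V → ℝ)) h3.symm
    simpa [hb_def] using h4
  -- helper counting lemmas
  have hcount : ∀ (u : V) (cst : ℝ), (∑ v, if G.Adj u v then cst else 0) = d u * cst := by
    intro u cst
    rw [← Finset.sum_filter, Finset.sum_const, nsmul_eq_mul]
    have e : Finset.filter (fun v => G.Adj u v) Finset.univ = G.neighborFinset u :=
      (SimpleGraph.neighborFinset_eq_filter G).symm
    rw [e]
    congr 1
  -- Rayleigh quotient bound
  have hray : ∀ y : V → ℝ, (∑ u, (S.mulVec y) u * y u) ≤ ∑ u, y u * y u := by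
    intro y
    set z : V → ℝ := fun u => y u / s u with hz
    have hentry : ∀ u, (S.mulVec y) u * y u = ∑ v, (if G.Adj u v then z u * z v else 0) := by
      intro u
      simp only [Matrix.mulVec, dotProduct, hS_def, Matrix.of_apply]
      rw [Finset.sum_mul]
      refine Finset.sum_congr rfl fun v _ => ?_
      by_cases h : G.Adj u v
      · simp only [h, if_true, hz]
        have h1 := hsne u
        have h2 := hsne v
        field_simp
      · simp [h]
    have hzz : ∀ u, d u * (z u * z u) = y u * y u := by
      intro u
      simp only [hz]
      rw [← hs2 u]
      have h1 := hsne u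
      field_simp
      try ring
    calc (∑ u, (S.mulVec y) u * y u)
        = ∑ u, ∑ v, (if G.Adj u v then z u * z v else 0) :=
          Finset.sum_congr rfl fun u _ => hentry u
      _ ≤ ∑ u, ∑ v, ((if G.Adj u v then z u * z u / 2 else 0)
            + (if G.Adj u v then z v * z v / 2 else 0)) := by
          refine Finset.sum_le_sum fun u _ => Finset.sum_le_sum fun v _ => ?_
          by_cases h : G.Adj u v
          · simp only [h, if_true]
            nlinarith [sq_nonneg (z u - z v)]
          · simp [h]
      _ = ∑ u, y u * y u := by
          rw [Finset.sum_congr rfl fun (u : V) _ => Finset.sum_add_distrib]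
          rw [Finset.sum_add_distrib]
          have e1 : (∑ u : V, ∑ v : V, if G.Adj u v then z u * z u / 2 else 0)
              = ∑ u : V, (y u * y u) / 2 := by
            refine Finset.sum_congr rfl fun u _ => ?_
            rw [hcount u, ← hzz u]
            try ring
          have e2 : (∑ u : V, ∑ v : V, if G.Adj u v then z v * z v / 2 else 0)
              = ∑ v : V, (y v * y v) / 2 := by
            rw [Finset.sum_comm]
            refine Finset.sum_congr rfl fun v _ => ?_
            have : ∀ u : V, (if G.Adj u v then z v * z v / 2 else 0)
                = (if G.Adj v u then z v * z v / 2 else 0) := by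
              intro u; rw [G.adj_comm]
            rw [Finset.sum_congr rfl fun u _ => this u, hcount v, ← hzz v]
            try ring
          rw [e1, e2, ← Finset.sum_add_distrib]
          exact Finset.sum_congr rfl fun u _ => by ring
  -- entry formula for normAdj
  have hMapp : ∀ (y : V → ℝ) (u : V),
      (normAdj G).mulVec y u = (d u)⁻¹ * ∑ v, (if G.Adj u v then y v else 0) := by
    intro y u
    simp only [normAdj, Matrix.mulVec, dotProduct, Matrix.of_apply]
    rw [Finset.mul_sum]
    refine Finset.sum_congr rfl fun v _ => ?_
    by_cases h : G.Adj u v <;> simp [h, hd_def]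
  -- fixed points of normAdj are constant
  have hMfix : ∀ y : V → ℝ, (normAdj G).mulVec y = y → ∃ t, ∀ u, y u = t := by
    intro y hy
    obtain ⟨u₀, -, hmax⟩ := Finset.exists_max_image Finset.univ y ⟨u₁, Finset.mem_univ u₁⟩
    have hstep : ∀ a, y a = y u₀ → ∀ bb, G.Adj a bb → y bb = y u₀ := by
      intro a ha bb hab
      have h1 : (d a)⁻¹ * (∑ v, if G.Adj a v then y v else 0) = y a := by
        rw [← hMapp y a, hy]
      have hda := (hd a).ne'
      have h2 : (∑ v, if G.Adj a v then y v else 0) = d a * y a := by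
        rw [← h1]; field_simp
      have h3 : (∑ v, if G.Adj a v then y u₀ - y v else 0) = 0 := by
        have e : (∑ v, if G.Adj a v then y u₀ - y v else 0)
            = (∑ v, if G.Adj a v then y u₀ else 0) - ∑ v, (if G.Adj a v then y v else 0) := by
          rw [← Finset.sum_sub_distrib]
          refine Finset.sum_congr rfl fun v _ => ?_
          by_cases h : G.Adj a v <;> simp [h]
        rw [e, hcount a (y u₀), h2, ha]
        ring
      have h4 := (Finset.sum_eq_zero_iff_of_nonneg ?_).mp h3 bb (Finset.mem_univ bb)
      · rw [if_pos hab] at h4; linarith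
      · intro v _
        by_cases h : G.Adj a v
        · simp only [h, if_true]
          have := hmax v (Finset.mem_univ v)
          linarith
        · simp [h]
    have hall : ∀ a bb (p : G.Walk a bb), y a = y u₀ → y bb = y u₀ := by
      intro a bb p
      induction p with
      | nil => exact id
      | cons h p ih => intro ha; exact ih (hstep _ ha _ h)
    refine ⟨y u₀, fun u => ?_⟩
    obtain ⟨p⟩ := hconn.preconnected u₀ u
    exact hall _ _ p rfl
  -- eigenvectors of S for eigenvalue 1 are multiples of s
  have heigS1 : ∀ w : V → ℝ, S.mulVec w = w → ∃ t : ℝ, w = t • s := by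
    intro w hw
    set y : V → ℝ := fun u => w u / s u with hy
    have hSapp : ∀ u, S.mulVec w u = (s u)⁻¹ * ∑ v, (if G.Adj u v then y v else 0) := by
      intro u
      simp only [Matrix.mulVec, dotProduct, hS_def, Matrix.of_apply]
      rw [Finset.mul_sum]
      refine Finset.sum_congr rfl fun v _ => ?_
      by_cases h : G.Adj u v
      · simp only [h, if_true, hy]
        have h2 := hsne v
        have h3 := hsne u
        field_simp
        try ring
      · simp [h]
    have hMy : (normAdj G).mulVec y = y := by
      funext u
      rw [hMapp]
      have h1 : (s u)⁻¹ * (∑ v, if G.Adj u v then y v else 0) = w u := by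
        rw [← hSapp u, hw]
      have h2 : (∑ v, if G.Adj u v then y v else 0) = s u * w u := by
        rw [← h1]
        have := hsne u
        field_simp
      rw [h2, ← hs2 u]
      simp only [hy]
      have := hsne u
      field_simp
      try ring
    obtain ⟨t, ht⟩ := hMfix y hMy
    refine ⟨t, funext fun u => ?_⟩
    have h6 : w u / s u = t := ht u
    have h7 : w u = t * s u := by
      rw [← h6]
      exact (div_mul_cancel₀ (w u) (hsne u)).symm
    simpa using h7
  -- s is a fixed point of S
  have hSw : S.mulVec s = s := by
    funext u
    simp only [Matrix.mulVec, dotProduct, hS_def, Matrix.of_apply]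
    have e : ∀ v, (if G.Adj u v then (s u * s v)⁻¹ else 0) * s v
        = (if G.Adj u v then (s u)⁻¹ else 0) := by
      intro v
      by_cases h : G.Adj u v
      · simp only [h, if_true]
        have h2 := hsne v
        have h3 := hsne u
        field_simp
        try ring
      · simp [h]
    rw [Finset.sum_congr rfl fun v _ => e v, hcount u]
    rw [← hs2 u]
    have := hsne u
    field_simp
  -- symmetry of the bilinear form of S
  have hdot_symm : ∀ p q : V → ℝ, (∑ u, S.mulVec p u * q u) = ∑ u, p u * S.mulVec q u := by
    intro p q
    simp only [Matrix.mulVec, dotProduct]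
    calc (∑ u, (∑ v, S u v * p v) * q u)
        = ∑ u, ∑ v, S u v * p v * q u :=
          Finset.sum_congr rfl fun u _ => Finset.sum_mul _ _ _
      _ = ∑ v, ∑ u, S u v * p v * q u := Finset.sum_comm
      _ = ∑ a, p a * ∑ b, S a b * q b := by
          refine Finset.sum_congr rfl fun a _ => ?_
          rw [Finset.mul_sum]
          refine Finset.sum_congr rfl fun b _ => ?_
          rw [hSsymm b a]; ring
  -- eigen-coefficients against fixed points
  have hcoeff : ∀ (p : V → ℝ) (i : V), S.mulVec p = p →
      (lam i - 1) * (∑ u, b i u * p u) = 0 := by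
    intro p i hp
    have h1 : (∑ u, (S.mulVec (b i)) u * p u) = ∑ u, b i u * p u := by
      rw [hdot_symm, hp]
    rw [hb_eig i] at h1
    have h2 : (∑ u, (lam i • b i) u * p u) = lam i * ∑ u, b i u * p u := by
      rw [Finset.mul_sum]
      exact Finset.sum_congr rfl fun u _ => by simp [mul_assoc]
    rw [h2] at h1
    linear_combination h1
  -- existence of top eigenvalue 1
  have hexists : ∃ i₀, lam i₀ = 1 := by
    by_contra hno
    push_neg at hno
    have hz : ∀ i, (∑ u, b i u * s u) = 0 := by
      intro i
      rcases mul_eq_zero.mp (hcoeff s i hSw) with h | h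
      · exact absurd (by linarith : lam i = 1) (hno i)
      · exact h
    have hE := hb_expand s
    rw [Finset.sum_congr rfl (fun i _ => by rw [hz i, zero_smul])] at hE
    rw [Finset.sum_const_zero] at hE
    have := congrFun hE u₁
    simp only [Pi.zero_apply] at this
    exact (hsne u₁) this
  have huniq : ∀ i j, lam i = 1 → lam j = 1 → i = j := by
    intro i j hi hj
    by_contra hij
    obtain ⟨t, ht⟩ := heigS1 (b i) (by rw [hb_eig i, hi, one_smul])
    obtain ⟨t', ht'⟩ := heigS1 (b j) (by rw [hb_eig j, hj, one_smul])
    have h0 : (∑ u, b i u * b j u) = 0 := by rw [hb_ortho i j, if_neg hij]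
    have h1 : (∑ u, b i u * b i u) = 1 := by rw [hb_ortho i i, if_pos rfl]
    have h1' : (∑ u, b j u * b j u) = 1 := by rw [hb_ortho j j, if_pos rfl]
    rw [ht, ht'] at h0
    rw [ht] at h1
    rw [ht'] at h1'
    simp only [Pi.smul_apply, smul_eq_mul] at h0 h1 h1'
    have hss : 0 < ∑ u, s u * s u :=
      Finset.sum_pos (fun u _ => mul_pos (hs u) (hs u)) ⟨u₁, Finset.mem_univ _⟩
    have e0 : t * t' * (∑ u, s u * s u) = 0 := by
      rw [Finset.mul_sum, ← h0]
      exact Finset.sum_congr rfl fun u _ => by ring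
    have e1 : t * t * (∑ u, s u * s u) = 1 := by
      rw [Finset.mul_sum, ← h1]
      exact Finset.sum_congr rfl fun u _ => by ring
    have e1' : t' * t' * (∑ u, s u * s u) = 1 := by
      rw [Finset.mul_sum, ← h1']
      exact Finset.sum_congr rfl fun u _ => by ring
    have htne : t ≠ 0 := by intro h; rw [h] at e1; simp at e1
    have ht'ne : t' ≠ 0 := by intro h; rw [h] at e1'; simp at e1'
    have : t * t' = 0 := by
      rcases mul_eq_zero.mp e0 with h | h
      · exact h
      · exact absurd h hss.ne'
    rcases mul_eq_zero.mp this with h | h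
    · exact htne h
    · exact ht'ne h
  obtain ⟨i₀, hi₀⟩ := hexists
  -- the multiset of eigenvalues equals the multiset of the μs
  have r1 : (∏ i, (X - C (μs i))).roots = Multiset.map μs Finset.univ.val := by
    rw [Finset.prod_eq_multiset_prod]
    have e : Multiset.map (fun i => X - C (μs i)) Finset.univ.val
        = Multiset.map (fun a : ℝ => X - C a) (Multiset.map μs Finset.univ.val) := by
      rw [Multiset.map_map]; rfl
    rw [e, Polynomial.roots_multiset_prod_X_sub_C]
  have r2 : (∏ i : V, (X - C (lam i))).roots = Multiset.map lam Finset.univ.val := by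
    rw [Finset.prod_eq_multiset_prod]
    have e : Multiset.map (fun i => X - C (lam i)) Finset.univ.val
        = Multiset.map (fun a : ℝ => X - C a) (Multiset.map lam Finset.univ.val) := by
      rw [Multiset.map_map]; rfl
    rw [e, Polynomial.roots_multiset_prod_X_sub_C]
  have hTT : Multiset.map μs Finset.univ.val = Multiset.map lam Finset.univ.val := by
    rw [← r1, ← r2, ← hSchar, heigs]
  -- eigenvalues are at most 1
  have hlam_le : ∀ i, lam i ≤ 1 := by
    intro i
    have h1 : (∑ u, b i u * b i u) = 1 := by rw [hb_ortho i i, if_pos rfl]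
    have h2 := hray (b i)
    rw [hb_eig i] at h2
    have h3 : (∑ u, (lam i • b i) u * b i u) = lam i * ∑ u, b i u * b i u := by
      rw [Finset.mul_sum]
      exact Finset.sum_congr rfl fun u _ => by simp [mul_assoc]
    rw [h3, h1, mul_one] at h2
    linarith
  have hμs0 : μs ⟨0, by omega⟩ = 1 := by
    have hle : μs ⟨0, by omega⟩ ≤ 1 := by
      have hm : μs ⟨0, by omega⟩ ∈ Multiset.map μs Finset.univ.val :=
        Multiset.mem_map.mpr ⟨⟨0, by omega⟩, Finset.mem_val.mpr (Finset.mem_univ _), rfl⟩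
      rw [hTT] at hm
      obtain ⟨i, -, hi⟩ := Multiset.mem_map.mp hm
      rw [← hi]; exact hlam_le i
    have hge : (1:ℝ) ≤ μs ⟨0, by omega⟩ := by
      have hm : (1:ℝ) ∈ Multiset.map lam Finset.univ.val :=
        Multiset.mem_map.mpr ⟨i₀, Finset.mem_val.mpr (Finset.mem_univ _), hi₀⟩
      rw [← hTT] at hm
      obtain ⟨kk, -, hkk⟩ := Multiset.mem_map.mp hm
      calc (1:ℝ) = μs kk := hkk.symm
        _ ≤ μs ⟨0, by omega⟩ := hanti (by simp [Fin.le_def])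
    linarith
  have hcount1 : Multiset.count 1 (Multiset.map lam Finset.univ.val) = 1 := by
    rw [Multiset.count_map, ← Finset.filter_val]
    rw [show Finset.filter (fun a => 1 = lam a) Finset.univ = {i₀} from ?_]
    · simp
    · apply Finset.eq_singleton_iff_unique_mem.mpr
      constructor
      · rw [Finset.mem_filter]; exact ⟨Finset.mem_univ _, hi₀.symm⟩
      · intro x hx
        rw [Finset.mem_filter] at hx
        exact huniq x i₀ hx.2.symm hi₀
  have hμs1_lt : μs ⟨1, by omega⟩ < 1 := by
    have hle : μs ⟨1, by omega⟩ ≤ 1 := by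
      rw [← hμs0]; exact hanti (by simp [Fin.le_def])
    rcases eq_or_lt_of_le hle with heq | h
    · exfalso
      have h2 : Multiset.count 1 (Multiset.map μs Finset.univ.val) = 1 := by
        rw [hTT]; exact hcount1
      rw [Multiset.count_map, ← Finset.filter_val] at h2
      have hsub : ({⟨0, by omega⟩, ⟨1, by omega⟩} : Finset (Fin (Fintype.card V)))
          ⊆ Finset.filter (fun a => 1 = μs a) Finset.univ := by
        intro x hx
        rw [Finset.mem_insert, Finset.mem_singleton] at hx
        rw [Finset.mem_filter]
        rcases hx with h' | h' <;> subst h'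
        · exact ⟨Finset.mem_univ _, hμs0.symm⟩
        · exact ⟨Finset.mem_univ _, heq.symm⟩
      have hcard := Finset.card_le_card hsub
      rw [Finset.card_insert_of_notMem (by simp), Finset.card_singleton] at hcard
      have h3 : (Finset.filter (fun a => 1 = μs a) Finset.univ).card = 1 := h2
      omega
    · exact h
  have hlam_le2 : ∀ i, i ≠ i₀ → lam i ≤ μs ⟨1, by omega⟩ := by
    intro i hi
    by_contra hgt
    push_neg at hgt
    have hm : lam i ∈ Multiset.map μs Finset.univ.val := by
      rw [hTT]
      exact Multiset.mem_map.mpr ⟨i, Finset.mem_val.mpr (Finset.mem_univ _), rfl⟩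
    obtain ⟨kk, -, hkk⟩ := Multiset.mem_map.mp hm
    have hk0 : kk = ⟨0, by omega⟩ := by
      by_contra hkk0
      have hge1 : (⟨1, by omega⟩ : Fin (Fintype.card V)) ≤ kk := by
        rw [Fin.le_def]
        have : kk.val ≠ 0 := fun h => hkk0 (Fin.ext h)
        show (1:ℕ) ≤ kk.val
        omega
      have := hanti hge1
      rw [hkk] at this
      linarith
    rw [hk0, hμs0] at hkk
    exact hi (huniq i i₀ hkk.symm hi₀)
  -- s is a multiple of b i₀
  have hsz : ∀ i, i ≠ i₀ → (∑ u, b i u * s u) = 0 := by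
    intro i hi
    rcases mul_eq_zero.mp (hcoeff s i hSw) with h | h
    · exact absurd (huniq i i₀ (by linarith) hi₀) hi
    · exact h
  set a0 : ℝ := ∑ u, b i₀ u * s u with ha0
  have hs_expand : s = a0 • b i₀ := by
    have h := hb_expand s
    rw [Finset.sum_eq_single i₀ (fun i _ hi => by rw [hsz i hi, zero_smul])
      (fun h' => absurd (Finset.mem_univ i₀) h')] at h
    exact h
  have ha0ne : a0 ≠ 0 := by
    intro h
    rw [h, zero_smul] at hs_expand
    exact hsne u₁ (congrFun hs_expand u₁)
  -- bilinear form identity for normAdj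
  have hB : ∀ p q : V → ℝ, dInner G ((normAdj G).mulVec p) q
      = ∑ u, ∑ v, (if G.Adj u v then p v * q u else 0) := by
    intro p q
    rw [dInner]
    refine Finset.sum_congr rfl fun u _ => ?_
    rw [hMapp p u]
    have e : (∑ v, if G.Adj u v then p v * q u else 0)
        = (∑ v, if G.Adj u v then p v else 0) * q u := by
      rw [Finset.sum_mul]
      exact Finset.sum_congr rfl fun v _ => by by_cases h : G.Adj u v <;> simp [h]
    rw [e]
    have hda := (hd u).ne'
    field_simp
    try ring
  -- the data of the final computation
  obtain ⟨k, hk⟩ := hc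
  set α : ℝ := dInner G (fun w => |f w|) c with hα
  set f₁ : V → ℝ := fun u => |f u| - α * c u with hf₁
  have hdcc : dInner G c c = 1 := by
    apply Real.sqrt_eq_one.mp hcnorm
  have hdff : dInner G f f = 1 := Real.sqrt_eq_one.mp hfnorm
  have hdaa : dInner G (fun u => |f u|) (fun u => |f u|) = 1 := by
    rw [← hdff, dInner, dInner]
    exact Finset.sum_congr rfl fun u _ => by rw [abs_mul_abs_self]
  have hdf₁c : dInner G f₁ c = 0 := by
    have e : ∀ u, f₁ u * c u * d u = |f u| * c u * d u - α * (c u * c u * d u) := by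
      intro u; simp only [hf₁]; ring
    rw [dInner, Finset.sum_congr rfl fun u _ => e u, Finset.sum_sub_distrib, ← Finset.mul_sum]
    have e1 : (∑ u, |f u| * c u * d u) = α := by rw [hα]; rfl
    have e2 : (∑ u, c u * c u * d u) = 1 := by rw [← hdcc]; rfl
    rw [e1, e2]
    ring
  have hkne : k ≠ 0 := by
    intro h
    have h2 : dInner G c c = 0 := by
      rw [dInner]
      refine Finset.sum_eq_zero fun u _ => by rw [hk u, h]; ring
    rw [hdcc] at h2
    exact one_ne_zero h2
  have hsumf₁d : (∑ u, f₁ u * d u) = 0 := by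
    have e : dInner G f₁ c = k * ∑ u, f₁ u * d u := by
      rw [dInner, Finset.mul_sum]
      exact Finset.sum_congr rfl fun u _ => by rw [hk u]; ring
    rw [hdf₁c] at e
    rcases mul_eq_zero.mp e.symm with h | h
    · exact absurd h hkne
    · exact h
  have hksum : k * k * (∑ u, d u) = 1 := by
    rw [← hdcc, dInner, Finset.mul_sum]
    exact Finset.sum_congr rfl fun u _ => by rw [hk u]; try ring
  set x : V → ℝ := fun u => s u * f₁ u with hx
  have hxs : (∑ u, x u * s u) = 0 := by
    rw [← hsumf₁d]
    refine Finset.sum_congr rfl fun u _ => ?_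
    simp only [hx]
    rw [← hs2 u]
    ring
  set a : V → ℝ := fun i => ∑ u, b i u * x u with ha
  have hai₀ : a i₀ = 0 := by
    have hbi₀ : ∀ u, b i₀ u = s u / a0 := by
      intro u
      have e := congrFun hs_expand u
      simp only [Pi.smul_apply, smul_eq_mul] at e
      rw [e]
      field_simp
    simp only [ha]
    rw [Finset.sum_congr rfl fun u _ => by rw [hbi₀ u]]
    rw [show (∑ u, s u / a0 * x u) = (∑ u, x u * s u) / a0 from by
      rw [Finset.sum_div]; exact Finset.sum_congr rfl fun u _ => by ring]
    rw [hxs, zero_div]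
  have hx_expand : x = ∑ i, a i • b i := hb_expand x
  have hpt : ∀ u, x u = ∑ i, a i * b i u := by
    intro u
    conv_lhs => rw [hx_expand]
    rw [Finset.sum_apply]
    exact Finset.sum_congr rfl fun i _ => by simp
  have hkey : ∀ p : V → ℝ, (∑ u, x u * p u) = ∑ i, a i * (∑ u, b i u * p u) := by
    intro p
    calc (∑ u, x u * p u) = ∑ u, (∑ i, a i * b i u) * p u :=
          Finset.sum_congr rfl fun u _ => by rw [← hpt u]
      _ = ∑ u, ∑ i, a i * b i u * p u :=
          Finset.sum_congr rfl fun u _ => Finset.sum_mul _ _ _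
      _ = ∑ i, ∑ u, a i * b i u * p u := Finset.sum_comm
      _ = ∑ i, a i * (∑ u, b i u * p u) := by
          refine Finset.sum_congr rfl fun i _ => ?_
          rw [Finset.mul_sum]
          exact Finset.sum_congr rfl fun u _ => by ring
  have hxx : (∑ u, x u * x u) = ∑ i, a i * a i := by
    rw [hkey x]
  have hSx : S.mulVec x = ∑ i, a i • (lam i • b i) := by
    conv_lhs => rw [hx_expand]
    have e : S.mulVec (∑ i, a i • b i) = ∑ i, a i • S.mulVec (b i) := by
      calc S.mulVec (∑ i, a i • b i) = S.mulVecLin (∑ i, a i • b i) := rfl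
        _ = ∑ i, S.mulVecLin (a i • b i) := map_sum _ _ _
        _ = ∑ i, a i • S.mulVec (b i) :=
            Finset.sum_congr rfl fun i _ => by rw [map_smul]; rfl
    rw [e]
    exact Finset.sum_congr rfl fun i _ => by rw [hb_eig i]
  have hpt2 : ∀ u, (S.mulVec x) u = ∑ i, a i * (lam i * b i u) := by
    intro u
    rw [hSx, Finset.sum_apply]
    exact Finset.sum_congr rfl fun i _ => by simp
  have hSxx : (∑ u, (S.mulVec x) u * x u) = ∑ i, lam i * (a i * a i) := by
    calc (∑ u, (S.mulVec x) u * x u)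
        = ∑ u, (∑ i, a i * (lam i * b i u)) * x u :=
          Finset.sum_congr rfl fun u _ => by rw [hpt2 u]
      _ = ∑ u, ∑ i, a i * (lam i * b i u) * x u :=
          Finset.sum_congr rfl fun u _ => Finset.sum_mul _ _ _
      _ = ∑ i, ∑ u, a i * (lam i * b i u) * x u := Finset.sum_comm
      _ = ∑ i, lam i * (a i * a i) := by
          refine Finset.sum_congr rfl fun i _ => ?_
          have e : (∑ u, a i * (lam i * b i u) * x u)
              = a i * lam i * (∑ u, b i u * x u) := by
            rw [Finset.mul_sum]
            exact Finset.sum_congr rfl fun u _ => by ring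
          rw [e]
          have e2 : (∑ u, b i u * x u) = a i := rfl
          rw [e2]
          ring
  have hmain : (∑ u, (S.mulVec x) u * x u) ≤ μs ⟨1, by omega⟩ * ∑ u, x u * x u := by
    rw [hSxx, hxx, Finset.mul_sum]
    refine Finset.sum_le_sum fun i _ => ?_
    by_cases h : i = i₀
    · subst h; rw [hai₀]; simp
    · have h1 := hlam_le2 i h
      have h2 : 0 ≤ a i * a i := mul_self_nonneg _
      nlinarith
  -- transfer to dInner
  have hBS : (∑ u, (S.mulVec x) u * x u) = ∑ u, ∑ v, (if G.Adj u v then f₁ v * f₁ u else 0) := by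
    refine Finset.sum_congr rfl fun u _ => ?_
    simp only [Matrix.mulVec, dotProduct, hS_def, Matrix.of_apply]
    rw [Finset.sum_mul]
    refine Finset.sum_congr rfl fun v _ => ?_
    by_cases h : G.Adj u v
    · rw [if_pos h, if_pos h]
      have e : x v = s v * f₁ v := rfl
      have e2 : x u = s u * f₁ u := rfl
      rw [e, e2]
      calc (s u * s v)⁻¹ * (s v * f₁ v) * (s u * f₁ u)
          = ((s u * s v)⁻¹ * (s u * s v)) * (f₁ v * f₁ u) := by ring
        _ = f₁ v * f₁ u := by
            rw [inv_mul_cancel₀ (mul_ne_zero (hsne u) (hsne v))]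
            ring
    · rw [if_neg h, if_neg h, zero_mul, zero_mul]
  have ht1 : (∑ u, (S.mulVec x) u * x u) = dInner G ((normAdj G).mulVec f₁) f₁ :=
    hBS.trans (hB f₁ f₁).symm
  have ht2 : (∑ u, x u * x u) = dInner G f₁ f₁ := by
    rw [dInner]
    refine Finset.sum_congr rfl fun u _ => ?_
    have e : x u = s u * f₁ u := rfl
    have e2 : (G.degree u : ℝ) = s u * s u := (hs2 u).symm
    rw [e, e2]
    ring
  have key1 : dInner G ((normAdj G).mulVec f₁) f₁ ≤ μs ⟨1, by omega⟩ * dInner G f₁ f₁ := by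
    rw [← ht1, ← ht2]; exact hmain
  -- lower bound
  have hMff : dInner G ((normAdj G).mulVec f) f = μ := by
    rw [hfe, dInner]
    have e : ∀ u, (μ • f) u * f u * d u = μ * (f u * f u * d u) := by
      intro u; simp only [Pi.smul_apply, smul_eq_mul]; ring
    rw [Finset.sum_congr rfl fun u _ => e u, ← Finset.mul_sum]
    have e2 : (∑ u, f u * f u * d u) = 1 := by rw [← hdff]; rfl
    rw [e2, mul_one]
  have key2 : -μ ≤ dInner G ((normAdj G).mulVec (fun u => |f u|)) (fun u => |f u|) := by
    rw [hB]
    have e : -μ = ∑ u, ∑ v, (if G.Adj u v then -(f v * f u) else 0) := by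
      calc -μ = -(∑ u, ∑ v, (if G.Adj u v then f v * f u else 0)) := by
            rw [← hMff, hB f f]
        _ = ∑ u, -(∑ v, (if G.Adj u v then f v * f u else 0)) := by
            rw [← Finset.sum_neg_distrib]
        _ = ∑ u, ∑ v, (if G.Adj u v then -(f v * f u) else 0) := by
            refine Finset.sum_congr rfl fun u _ => ?_
            rw [← Finset.sum_neg_distrib]
            exact Finset.sum_congr rfl fun v _ => by by_cases h : G.Adj u v <;> simp [h]
    rw [e]
    refine Finset.sum_le_sum fun u _ => Finset.sum_le_sum fun v _ => ?_
    by_cases h : G.Adj u v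
    · simp only [h, if_true]
      calc -(f v * f u) ≤ |f v * f u| := neg_le_abs _
        _ = |f v| * |f u| := abs_mul _ _
    · simp [h]
  -- decomposition of the quadratic form at |f|
  have habs_dec : ∀ u, |f u| = f₁ u + α * c u := by
    intro u; simp only [hf₁]; ring
  have hE1 : (∑ u, ∑ v, (if G.Adj u v then c v * f₁ u else 0)) = 0 := by
    have e : ∀ u : V, (∑ v, if G.Adj u v then c v * f₁ u else 0) = d u * (k * f₁ u) := by
      intro u
      rw [← hcount u (k * f₁ u)]
      exact Finset.sum_congr rfl fun v _ => by
        by_cases h : G.Adj u v <;> simp [h, hk v]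
    rw [Finset.sum_congr rfl fun u _ => e u]
    rw [show (∑ u, d u * (k * f₁ u)) = k * ∑ u, f₁ u * d u from by
      rw [Finset.mul_sum]; exact Finset.sum_congr rfl fun u _ => by ring]
    rw [hsumf₁d, mul_zero]
  have hE2 : (∑ u, ∑ v, (if G.Adj u v then f₁ v * c u else 0)) = 0 := by
    rw [Finset.sum_comm]
    have e : ∀ v : V, (∑ u, if G.Adj u v then f₁ v * c u else 0) = d v * (k * f₁ v) := by
      intro v
      rw [← hcount v (k * f₁ v)]
      refine Finset.sum_congr rfl fun u _ => ?_
      rw [G.adj_comm]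
      by_cases h : G.Adj v u <;> simp [h, hk u] <;> ring
    rw [Finset.sum_congr rfl fun v _ => e v]
    rw [show (∑ v, d v * (k * f₁ v)) = k * ∑ v, f₁ v * d v from by
      rw [Finset.mul_sum]; exact Finset.sum_congr rfl fun v _ => by ring]
    rw [hsumf₁d, mul_zero]
  have hE3 : (∑ u, ∑ v, (if G.Adj u v then c v * c u else 0)) = 1 := by
    have e : ∀ u : V, (∑ v, if G.Adj u v then c v * c u else 0) = d u * (k * k) := by
      intro u
      rw [← hcount u (k * k)]
      exact Finset.sum_congr rfl fun v _ => by
        by_cases h : G.Adj u v <;> simp [h, hk v, hk u]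
    rw [Finset.sum_congr rfl fun u _ => e u]
    rw [← hksum, Finset.mul_sum]
    exact Finset.sum_congr rfl fun u _ => by ring
  have hBdec : dInner G ((normAdj G).mulVec (fun u => |f u|)) (fun u => |f u|)
      = dInner G ((normAdj G).mulVec f₁) f₁ + α * α := by
    rw [hB, hB]
    have hterm : ∀ u v : V, (if G.Adj u v then |f v| * |f u| else 0)
        = (if G.Adj u v then f₁ v * f₁ u else 0)
          + (α * (if G.Adj u v then c v * f₁ u else 0)
          + (α * (if G.Adj u v then f₁ v * c u else 0)
          + (α * α) * (if G.Adj u v then c v * c u else 0))) := by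
      intro u v
      by_cases h : G.Adj u v
      · simp only [h, if_true]
        rw [habs_dec u, habs_dec v]
        ring
      · simp [h]
    rw [Finset.sum_congr rfl fun u _ => Finset.sum_congr rfl fun v _ => hterm u v]
    rw [Finset.sum_congr rfl fun (u : V) _ => Finset.sum_add_distrib, Finset.sum_add_distrib]
    rw [Finset.sum_congr rfl fun (u : V) _ => Finset.sum_add_distrib, Finset.sum_add_distrib]
    rw [Finset.sum_congr rfl fun (u : V) _ => Finset.sum_add_distrib, Finset.sum_add_distrib]
    rw [show (∑ u, ∑ v, α * (if G.Adj u v then c v * f₁ u else 0))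
        = α * ∑ u, ∑ v, (if G.Adj u v then c v * f₁ u else 0) from by
      rw [Finset.mul_sum]
      exact Finset.sum_congr rfl fun u _ => by rw [Finset.mul_sum]]
    rw [show (∑ u, ∑ v, α * (if G.Adj u v then f₁ v * c u else 0))
        = α * ∑ u, ∑ v, (if G.Adj u v then f₁ v * c u else 0) from by
      rw [Finset.mul_sum]
      exact Finset.sum_congr rfl fun u _ => by rw [Finset.mul_sum]]
    rw [show (∑ u, ∑ v, (α * α) * (if G.Adj u v then c v * c u else 0))
        = (α * α) * ∑ u, ∑ v, (if G.Adj u v then c v * c u else 0) from by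
      rw [Finset.mul_sum]
      exact Finset.sum_congr rfl fun u _ => by rw [Finset.mul_sum]]
    rw [hE1, hE2, hE3]
    ring
  have hNdec : dInner G (fun u => |f u|) (fun u => |f u|) = dInner G f₁ f₁ + α * α := by
    rw [dInner, dInner]
    have e : ∀ u, |f u| * |f u| * d u
        = f₁ u * f₁ u * d u + (2 * α * (f₁ u * c u * d u) + α * α * (c u * c u * d u)) := by
      intro u
      rw [habs_dec u]
      ring
    rw [Finset.sum_congr rfl fun u _ => e u, Finset.sum_add_distrib, Finset.sum_add_distrib,
      ← Finset.mul_sum, ← Finset.mul_sum]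
    have e1 : (∑ u, f₁ u * c u * d u) = 0 := hdf₁c
    have e2 : (∑ u, c u * c u * d u) = 1 := hdcc
    rw [e1, e2]
    ring
  -- wrap up
  have hN_nonneg : 0 ≤ dInner G f₁ f₁ :=
    Finset.sum_nonneg fun u _ => mul_nonneg (mul_self_nonneg _) (Nat.cast_nonneg _)
  have hNα : dInner G f₁ f₁ + α * α = 1 := hNdec.symm.trans hdaa
  have hfinal : (1 - μs ⟨1, by omega⟩) * dInner G f₁ f₁ ≤ 1 + μ := by
    rw [hBdec] at key2
    nlinarith [key1, key2, hNα]
  have hpos : (0:ℝ) < 1 - μs ⟨1, by omega⟩ := by linarith [hμs1_lt]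
  have hgoal : dNorm G f₁ ^ 2 = dInner G f₁ f₁ := by
    rw [dNorm, sq, Real.mul_self_sqrt hN_nonneg]
  rw [hgoal]
  rw [le_div_iff₀ hpos]
  linarith [hfinal]



end
end

section
/- Let G be a finite connected vertex-transitive graph and let μ be a simple eigenvalue of its normalized adjacency matrix D^{-1}A with eigenfunction f. Then |f| is a constant function; in particular, if f is normalized so that f(a) ∈ {−1, 1} for some vertex a, then f(u) ∈ {−1, 1} for all vertices u. -/
open Finset Polynomial

noncomputable section
open scoped Classical

/-- A graph is vertex-transitive if its automorphism group acts transitively on vertices. -/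
def VertexTransitive {V : Type*} (G : SimpleGraph V) : Prop :=
  ∀ u v : V, ∃ φ : G ≃g G, φ u = v

/-!
An automorphism `φ` maps an eigenfunction `f` of `D⁻¹A` to the eigenfunction `f ∘ φ` of the same
eigenvalue. If the eigenspace is a line, `f ∘ φ = c • f`, and comparing `∑ |f ∘ φ| = ∑ |f|`
forces `|c| = 1`. Since the automorphisms act transitively, `|f|` is constant.
-/

theorem Module.End.exists_smul_eq_of_finrank_eigenspace_eq_one {K M : Type*} [Field K]
    [AddCommGroup M] [Module K M] {T : Module.End K M} {μ : K}
    (hsimple : Module.finrank K (T.eigenspace μ) = 1) {f g : M}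
    (hf : f ∈ T.eigenspace μ) (hf0 : f ≠ 0) (hg : g ∈ T.eigenspace μ) :
    ∃ c : K, g = c • f := by
  obtain ⟨c, hc⟩ := (finrank_eq_one_iff_of_nonzero' ⟨f, hf⟩ (by simpa using hf0)).mp hsimple
    ⟨g, hg⟩
  exact ⟨c, (congrArg Subtype.val hc).symm⟩

theorem abs_eq_one_of_comp_eq_smul {V : Type*} [Fintype V] {f : V → ℝ} (hf : f ≠ 0)
    (σ : V ≃ V) {c : ℝ} (hc : f ∘ σ = c • f) : |c| = 1 := by
  have hpos : 0 < ∑ x, |f x| := by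
    obtain ⟨x, hx⟩ := Function.ne_iff.mp hf
    exact Finset.sum_pos' (fun _ _ ↦ abs_nonneg _) ⟨x, mem_univ x, abs_pos.mpr hx⟩
  have hsum : |c| * ∑ x, |f x| = ∑ x, |f x| := calc
    |c| * ∑ x, |f x| = ∑ x, |c * f x| := by simp only [mul_sum, abs_mul]
    _ = ∑ x, |f (σ x)| := sum_congr rfl fun x _ ↦ congrArg abs (congrFun hc x).symm
    _ = ∑ x, |f x| := σ.sum_comp (fun x ↦ |f x|)
  exact (mul_eq_right₀ hpos.ne').mp hsum

namespace SimpleGraph.Iso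

variable {V W : Type*} [Fintype V] [Fintype W] {G : SimpleGraph V} {G' : SimpleGraph W}

theorem normAdj_submatrix (φ : G ≃g G') : (normAdj G').submatrix φ φ = normAdj G := by
  ext x y
  simp [normAdj, φ.map_adj_iff]

theorem normAdj_mulVec_comp (φ : G ≃g G') (f : W → ℝ) :
    (normAdj G).mulVec (f ∘ φ) = (normAdj G').mulVec f ∘ φ := by
  have hf : (f ∘ φ) ∘ φ.toEquiv.symm = f := funext fun x ↦ congrArg f (φ.apply_symm_apply x)
  rw [← φ.normAdj_submatrix]
  exact (Matrix.submatrix_mulVec_equiv _ _ _ φ.toEquiv).trans (by rw [hf])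

theorem comp_mem_eigenspace_normAdj (φ : G ≃g G') {f : W → ℝ} {μ : ℝ}
    (hf : f ∈ Module.End.eigenspace (normAdj G').mulVecLin μ) :
    f ∘ φ ∈ Module.End.eigenspace (normAdj G).mulVecLin μ := by
  rw [Module.End.mem_eigenspace_iff, Matrix.mulVecLin_apply] at hf ⊢
  rw [φ.normAdj_mulVec_comp, hf]
  rfl

end SimpleGraph.Iso

theorem abs_eigenfunction_const_general {V : Type*} [Fintype V] (G : SimpleGraph V)
    (hvt : VertexTransitive G) (μ : ℝ)
    (hsimple : Module.finrank ℝ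
      (Module.End.eigenspace (Matrix.mulVecLin (normAdj G)) μ) = 1)
    (f : V → ℝ) (hf : f ≠ 0) (hfe : (normAdj G).mulVec f = μ • f) :
    (∀ u v : V, |f u| = |f v|) ∧
      ((∃ a : V, f a = -1 ∨ f a = 1) → ∀ u : V, f u = -1 ∨ f u = 1) := by
  have hfμ : f ∈ Module.End.eigenspace (normAdj G).mulVecLin μ := by
    rwa [Module.End.mem_eigenspace_iff, Matrix.mulVecLin_apply]
  have habs : ∀ u v : V, |f u| = |f v| := by
    intro u v
    obtain ⟨φ, rfl⟩ := hvt u v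
    obtain ⟨c, hc⟩ := Module.End.exists_smul_eq_of_finrank_eigenspace_eq_one hsimple hfμ hf
      (φ.comp_mem_eigenspace_normAdj hfμ)
    have hu : f (φ u) = c * f u := congrFun hc u
    rw [hu, abs_mul, abs_eq_one_of_comp_eq_smul hf φ.toEquiv hc, one_mul]
  refine ⟨habs, ?_⟩
  rintro ⟨a, ha⟩ u
  have hfa : |f a| = 1 := by rcases ha with h | h <;> simp [h]
  rw [or_comm, ← abs_eq zero_le_one, habs u a, hfa]

/-- For a finite connected vertex-transitive graph, if `μ` is a simple eigenvalue
(one-dimensional eigenspace) of the normalized adjacency matrix with eigenfunction `f`,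
then `|f|` is constant; in particular, if `f a ∈ {-1, 1}` for some vertex `a`, then
`f u ∈ {-1, 1}` for every vertex `u`. -/
theorem abs_eigenfunction_const {V : Type*} [Fintype V] (G : SimpleGraph V)
    (hconn : G.Connected) (hvt : VertexTransitive G) (μ : ℝ)
    (hsimple : Module.finrank ℝ
      (Module.End.eigenspace (Matrix.mulVecLin (normAdj G)) μ) = 1)
    (f : V → ℝ) (hf : f ≠ 0) (hfe : (normAdj G).mulVec f = μ • f) :
    (∀ u v : V, |f u| = |f v|) ∧
      ((∃ a : V, f a = -1 ∨ f a = 1) → ∀ u : V, f u = -1 ∨ f u = 1) :=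
  abs_eigenfunction_const_general G hvt μ hsimple f hf hfe

end
end
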